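/- Let B and H be a matched pair of finite-dimensional Hopf algebras with double cross product A = B ⋈ H. Then the quotient right B-module Q = A/B⁺A is isomorphic to H equipped with the right B-action h ◅ b, via the map b ⋈ h ↦ ε_B(b)h. -/

import Mathlib

/-!
The map `b ⊗ h ↦ ε(b) h` kills `B⁺A`, and conversely `b ⊗ h ≡ 1 ⊗ ε(b) h` modulo `B⁺A`
because `b - ε(b) 1 ∈ B⁺`; so it induces `A/B⁺A ≅ H`. It intertwines the right `B`-actions
because `ε(h₍₁₎ ▻ b₍₁₎) = ε(h₍₁₎) ε(b₍₁₎)` collapses `(1 ⋈ h)(b ⋈ 1)` to `ε(h₍₁₎)ε(b₍₁₎) h₍₂₎ ◅ b₍₂₎ = h ◅ b`.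
-/

open TensorProduct

universe u

variable (k : Type u) [Field k] (B H : Type u) [Ring B] [Ring H]
  [HopfAlgebra k B] [HopfAlgebra k H]
  (act1 : H →ₗ[k] B →ₗ[k] B)  -- the action ▻ : H ⊗ B → B
  (act2 : H →ₗ[k] B →ₗ[k] H)  -- the action ◅ : H ⊗ B → H, (h, b) ↦ h ◅ b

/-- The action `▻` as a map `H ⊗ B → B`. -/
noncomputable def act1L : H ⊗[k] B →ₗ[k] B := TensorProduct.lift act1

/-- The action `◅` as a map `H ⊗ B → H`. -/
noncomputable def act2L : H ⊗[k] B →ₗ[k] H := TensorProduct.lift act2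

/-- `Δ(h) ⊗ Δ(b)`, rearranged as `∑ (h₍₁₎ ⊗ b₍₁₎) ⊗ (h₍₂₎ ⊗ b₍₂₎)`. -/
noncomputable def dPair (h : H) (b : B) : (H ⊗[k] B) ⊗[k] (H ⊗[k] B) :=
  TensorProduct.tensorTensorTensorComm k H H B B
    (Coalgebra.comul (R := k) h ⊗ₜ[k] Coalgebra.comul (R := k) b)

/-- The right action of `b ∈ B` on `A = B ⋈ H`:
`(b' ⊗ h) · b = ∑ b'(h₍₁₎ ▻ b₍₁₎) ⊗ (h₍₂₎ ◅ b₍₂₎)`. -/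
noncomputable def rAct (b : B) : B ⊗[k] H →ₗ[k] B ⊗[k] H :=
  (TensorProduct.map (LinearMap.mul' k B) LinearMap.id).comp
    (((TensorProduct.assoc k B B H).symm.toLinearMap).comp
      ((((TensorProduct.map (act1L k B H act1) (act2L k B H act2)).comp
          (((TensorProduct.tensorTensorTensorComm k H H B B).toLinearMap).comp
            (((TensorProduct.mk k (H ⊗[k] H) (B ⊗[k] B)).flip
                (Coalgebra.comul (R := k) b)).comp
              (Coalgebra.comul (R := k))))).lTensor B)))

/-- The ideal `B⁺A ⊆ A = B ⋈ H` (using `(b ⋈ 1)(b' ⋈ h) = bb' ⋈ h`). -/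
noncomputable def augBA : Submodule k (B ⊗[k] H) :=
  Submodule.span k {z : B ⊗[k] H | ∃ b b' : B, ∃ h : H,
    Coalgebra.counit (R := k) b = 0 ∧ z = (b * b') ⊗ₜ[k] h}

section CounitTensor

variable {R A M : Type*} [CommSemiring R] [AddCommMonoid A] [Module R A] [Coalgebra R A]
  [AddCommMonoid M] [Module R M]

noncomputable def counitTensor : A ⊗[R] M →ₗ[R] M :=
  TensorProduct.lid R M ∘ₗ (Coalgebra.counit (R := R) (A := A)).rTensor M

@[simp]
lemma counitTensor_tmul (a : A) (m : M) :
    counitTensor (a ⊗ₜ[R] m) = Coalgebra.counit (R := R) a • m := by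
  simp [counitTensor]

lemma counitTensor_comul (a : A) : counitTensor (Coalgebra.comul (R := R) a) = a := by
  simp [counitTensor, Coalgebra.rTensor_counit_comul]

end CounitTensor

section Augmentation

variable {R A M : Type*} [CommRing R] [Ring A] [Bialgebra R A] [AddCommGroup M] [Module R M]

lemma counitTensor_surjective : Function.Surjective (counitTensor (R := R) (A := A) (M := M)) :=
  fun m => ⟨1 ⊗ₜ m, by simp⟩

lemma counitTensor_mul_assoc_symm_tmul (a : A) (t : A ⊗[R] M) :
    counitTensor ((TensorProduct.map (LinearMap.mul' R A) LinearMap.id)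
      ((TensorProduct.assoc R A A M).symm (a ⊗ₜ[R] t))) =
    Coalgebra.counit (R := R) a • counitTensor t := by
  induction t using TensorProduct.induction_on with
  | zero => simp
  | add x y hx hy => simp only [tmul_add, map_add, hx, hy, smul_add]
  | tmul a' m => simp [mul_smul]

variable (R A M) in
noncomputable def augmentationSpan : Submodule R (A ⊗[R] M) :=
  Submodule.span R {z : A ⊗[R] M | ∃ a a' : A, ∃ m : M,
    Coalgebra.counit (R := R) a = 0 ∧ z = (a * a') ⊗ₜ[R] m}

lemma sub_one_tmul_counitTensor_mem_augmentationSpan (x : A ⊗[R] M) :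
    x - 1 ⊗ₜ counitTensor x ∈ augmentationSpan R A M := by
  induction x using TensorProduct.induction_on with
  | zero => simp
  | add x y hx hy =>
    simpa only [map_add, tmul_add, add_sub_add_comm] using add_mem hx hy
  | tmul a m =>
    have hε : Coalgebra.counit (R := R) (a - Coalgebra.counit (R := R) a • 1) = 0 := by
      simp
    refine Submodule.subset_span ⟨a - Coalgebra.counit (R := R) a • 1, 1, m, hε, ?_⟩
    rw [counitTensor_tmul, mul_one, sub_tmul, tmul_smul, smul_tmul']

lemma augmentationSpan_eq_ker_counitTensor :
    augmentationSpan R A M = LinearMap.ker (counitTensor (R := R) (A := A) (M := M)) := by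
  apply le_antisymm
  · rw [augmentationSpan, Submodule.span_le]
    rintro _ ⟨a, a', m, ha, rfl⟩
    simp [ha]
  · intro x hx
    simpa [LinearMap.mem_ker.mp hx] using sub_one_tmul_counitTensor_mem_augmentationSpan x

end Augmentation

section MatchedPair

variable {k B H act1 act2}

lemma counitTensor_map_act_tensorTensorTensorComm
    (h7 : ∀ (h : H) (b : B), Coalgebra.counit (R := k) (act1 h b) =
      Coalgebra.counit (R := k) h * Coalgebra.counit (R := k) b)
    (hh : H ⊗[k] H) (bb : B ⊗[k] B) :
    counitTensor (TensorProduct.map (act1L k B H act1) (act2L k B H act2)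
      (TensorProduct.tensorTensorTensorComm k H H B B (hh ⊗ₜ[k] bb))) =
    act2 (counitTensor hh) (counitTensor bb) := by
  induction hh using TensorProduct.induction_on with
  | zero => simp
  | add x y hx hy => simp only [add_tmul, map_add, LinearMap.add_apply, hx, hy]
  | tmul h₁ h₂ =>
    induction bb using TensorProduct.induction_on with
    | zero => simp
    | add x y hx hy => simp only [tmul_add, map_add, hx, hy]
    | tmul b₁ b₂ =>
      simp [act1L, act2L, h7, mul_smul, smul_comm (Coalgebra.counit (R := k) h₁)]

lemma counitTensor_map_act_dPair
    (h7 : ∀ (h : H) (b : B), Coalgebra.counit (R := k) (act1 h b) =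
      Coalgebra.counit (R := k) h * Coalgebra.counit (R := k) b)
    (h : H) (b : B) :
    counitTensor (TensorProduct.map (act1L k B H act1) (act2L k B H act2) (dPair k B H h b)) =
      act2 h b := by
  rw [dPair, counitTensor_map_act_tensorTensorTensorComm h7, counitTensor_comul,
    counitTensor_comul]

lemma counitTensor_rAct
    (h7 : ∀ (h : H) (b : B), Coalgebra.counit (R := k) (act1 h b) =
      Coalgebra.counit (R := k) h * Coalgebra.counit (R := k) b)
    (b : B) (x : B ⊗[k] H) :
    counitTensor (rAct k B H act1 act2 b x) = act2 (counitTensor x) b := by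
  induction x using TensorProduct.induction_on with
  | zero => simp
  | add x y hx hy => simp only [map_add, hx, hy, LinearMap.add_apply]
  | tmul b' h =>
    have hdPair : (TensorProduct.tensorTensorTensorComm k H H B B)
        (Coalgebra.comul (R := k) h ⊗ₜ[k] Coalgebra.comul (R := k) b) = dPair k B H h b := rfl
    simp only [rAct, LinearMap.comp_apply, LinearMap.lTensor_tmul, LinearMap.flip_apply,
      TensorProduct.mk_apply, LinearEquiv.coe_coe, hdPair, counitTensor_mul_assoc_symm_tmul,
      counitTensor_map_act_dPair h7, counitTensor_tmul, map_smul, LinearMap.smul_apply]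

end MatchedPair

theorem double_cross_product_quotient_module
    -- `B` is a left `H`-module coalgebra
    (h7 : ∀ (h : H) (b : B), Coalgebra.counit (R := k) (act1 h b) =
      Coalgebra.counit (R := k) h * Coalgebra.counit (R := k) b) :
    ∃ e : ((B ⊗[k] H) ⧸ augBA k B H) ≃ₗ[k] H,
      (∀ (b : B) (h : H), e (Submodule.Quotient.mk (b ⊗ₜ[k] h)) =
        Coalgebra.counit (R := k) b • h) ∧
      (∀ (b : B) (x : B ⊗[k] H),
        e (Submodule.Quotient.mk (rAct k B H act1 act2 b x)) =
          act2 (e (Submodule.Quotient.mk x)) b) := by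
  let φ : B ⊗[k] H →ₗ[k] H := counitTensor
  have hker : augBA k B H = LinearMap.ker φ := augmentationSpan_eq_ker_counitTensor
  let e := (Submodule.quotEquivOfEq _ _ hker).trans
    (φ.quotKerEquivOfSurjective counitTensor_surjective)
  have he (x : B ⊗[k] H) : e (Submodule.Quotient.mk x) = φ x := by
    simp only [e, LinearEquiv.trans_apply, Submodule.quotEquivOfEq_mk,
      LinearMap.quotKerEquivOfSurjective_apply_mk]
  exact ⟨e, fun b h => (he _).trans (counitTensor_tmul b h),
    fun b x => by rw [he, he]; exact counitTensor_rAct h7 b x⟩
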